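/- For $F(t) = -\log t + (t-1)$, the $F$-divergence on $\mathcal{F}^+$ equals the Bregman divergence of the potential function $\bar{\varphi}(\eta) = \sum_{(x,y)}\eta_{xy}\log\eta_{xy} - \sum_x \eta_x\log\eta^x$ under the identification $\eta = \bar{T}(f)$: explicitly, $\mathcal{D}_{\mathrm{Bre}}(\bar{T}(f), \bar{T}(g)) = \mathcal{D}_F(f,g)$ for all positive functions $f,g$ on $\mathcal{E}$, where $\mathcal{D}_{\mathrm{Bre}}(\eta,\zeta) = \bar{\varphi}(\eta) - \bar{\varphi}(\zeta) + \sum_{(x,y)} \frac{\partial\bar{\varphi}}{\partial\eta_{xy}}(\zeta)(\zeta_{xy} - \eta_{xy})$. -/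
import Mathlib


/-- The edge set `E` is strongly connected. -/
def StrongConn {n : ℕ} (E : Finset (Fin n × Fin n)) : Prop :=
  ∀ x y : Fin n, Relation.TransGen (fun a b => (a, b) ∈ E) x y

/-- The potential function `φ̄(η) = ∑_{(x,y)∈E} η_{xy} log η_{xy} - ∑_x η_x log η^x`,
where `η_x` is the row sum and `η^x` the column sum at `x`. -/
noncomputable def phiBar {n : ℕ} (E : Finset (Fin n × Fin n))
    (η : Fin n × Fin n → ℝ) : ℝ :=
  (∑ e ∈ E, η e * Real.log (η e)) -
    ∑ x : Fin n, (∑ e ∈ E.filter (fun e => e.1 = x), η e) *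
      Real.log (∑ e ∈ E.filter (fun e => e.2 = x), η e)

/-- Grouping a sum over edges by the source vertex. -/
lemma fib1 {n : ℕ} (E : Finset (Fin n × Fin n)) (w : Fin n × Fin n → ℝ)
    (h : Fin n → ℝ) :
    ∑ x : Fin n, (∑ e ∈ E.filter (fun e => e.1 = x), w e) * h x
      = ∑ e ∈ E, w e * h e.1 := by
  rw [← Finset.sum_fiberwise E (fun e => e.1) (fun e => w e * h e.1)]
  refine Finset.sum_congr rfl fun x _ => ?_
  rw [Finset.sum_mul]
  exact Finset.sum_congr rfl fun e he => by rw [(Finset.mem_filter.mp he).2]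

/-- Grouping a sum over edges by the target vertex. -/
lemma fib2 {n : ℕ} (E : Finset (Fin n × Fin n)) (w : Fin n × Fin n → ℝ)
    (h : Fin n → ℝ) :
    ∑ x : Fin n, (∑ e ∈ E.filter (fun e => e.2 = x), w e) * h x
      = ∑ e ∈ E, w e * h e.2 := by
  rw [← Finset.sum_fiberwise E (fun e => e.2) (fun e => w e * h e.2)]
  refine Finset.sum_congr rfl fun x _ => ?_
  rw [Finset.sum_mul]
  exact Finset.sum_congr rfl fun e he => by rw [(Finset.mem_filter.mp he).2]

/-- With `F(t) = -log t + (t-1)`, the Bregman divergence of `φ̄` at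
`η = T̄(f), ζ = T̄(g)` (with `∂φ̄/∂η_{xy}(ζ) = log ζ_{xy} + 1 - log ζ^x - ζ_y/ζ^y`)
equals the `F`-divergence `𝒟_F(f,g)`. -/
theorem bregman_eq_F_divergence {n : ℕ} (E : Finset (Fin n × Fin n))
    (hconn : StrongConn E)
    (f g : Fin n × Fin n → ℝ)
    (hf : ∀ e ∈ E, 0 < f e) (hg : ∀ e ∈ E, 0 < g e)
    (rf rg : ℝ) (hrf : 0 < rf) (hrg : 0 < rg)
    (μf : Fin n → ℝ) (hμf : ∀ x, 0 < μf x) (hμf1 : ∑ x, μf x = 1)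
    (heigf : ∀ y, ∑ e ∈ E.filter (fun e => e.2 = y), μf e.1 * f e = rf * μf y)
    (μg : Fin n → ℝ) (hμg : ∀ x, 0 < μg x) (hμg1 : ∑ x, μg x = 1)
    (heigg : ∀ y, ∑ e ∈ E.filter (fun e => e.2 = y), μg e.1 * g e = rg * μg y) :
    phiBar E (fun e => μf e.1 * f e) - phiBar E (fun e => μg e.1 * g e)
      + (∑ e ∈ E,
          (Real.log (μg e.1 * g e) + 1
            - Real.log (∑ e' ∈ E.filter (fun e' => e'.2 = e.1), μg e'.1 * g e')
            - (∑ e' ∈ E.filter (fun e' => e'.1 = e.2), μg e'.1 * g e') /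
                (∑ e' ∈ E.filter (fun e' => e'.2 = e.2), μg e'.1 * g e'))
          * (μg e.1 * g e - μf e.1 * f e))
    = ∑ e ∈ E, μf e.1 * f e *
        (-Real.log ((g e / rg) / (f e / rf)) + ((g e / rg) / (f e / rf) - 1)) := by
  -- row sums of ζ
  set ρ : Fin n → ℝ := fun x => ∑ e ∈ E.filter (fun e => e.1 = x), μg e.1 * g e with hρ
  -- Step A : phiBar of η
  have hphif : phiBar E (fun e => μf e.1 * f e)
      = ∑ e ∈ E, μf e.1 * f e * (Real.log (f e) - Real.log rf) := by
    unfold phiBar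
    have h2 : (∑ x : Fin n, (∑ e ∈ E.filter (fun e => e.1 = x), μf e.1 * f e) *
        Real.log (∑ e ∈ E.filter (fun e => e.2 = x), μf e.1 * f e))
        = ∑ e ∈ E, μf e.1 * f e * Real.log (rf * μf e.1) := by
      rw [← fib1 E (fun e => μf e.1 * f e) (fun x => Real.log (rf * μf x))]
      exact Finset.sum_congr rfl fun x _ => by rw [heigf x]
    rw [h2, ← Finset.sum_sub_distrib]
    refine Finset.sum_congr rfl fun e he => ?_
    rw [Real.log_mul (hμf e.1).ne' (hf e he).ne', Real.log_mul hrf.ne' (hμf e.1).ne']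
    ring
  have hphig : phiBar E (fun e => μg e.1 * g e)
      = ∑ e ∈ E, μg e.1 * g e * (Real.log (g e) - Real.log rg) := by
    unfold phiBar
    have h2 : (∑ x : Fin n, (∑ e ∈ E.filter (fun e => e.1 = x), μg e.1 * g e) *
        Real.log (∑ e ∈ E.filter (fun e => e.2 = x), μg e.1 * g e))
        = ∑ e ∈ E, μg e.1 * g e * Real.log (rg * μg e.1) := by
      rw [← fib1 E (fun e => μg e.1 * g e) (fun x => Real.log (rg * μg x))]
      exact Finset.sum_congr rfl fun x _ => by rw [heigg x]
    rw [h2, ← Finset.sum_sub_distrib]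
    refine Finset.sum_congr rfl fun e he => ?_
    rw [Real.log_mul (hμg e.1).ne' (hg e he).ne', Real.log_mul hrg.ne' (hμg e.1).ne']
    ring
  -- total masses
  have hsumη : ∑ e ∈ E, μf e.1 * f e = rf := by
    rw [← Finset.sum_fiberwise E (fun e => e.2) (fun e => μf e.1 * f e)]
    simp_rw [heigf, ← Finset.mul_sum, hμf1, mul_one]
  have hsumζ : ∑ e ∈ E, μg e.1 * g e = rg := by
    rw [← Finset.sum_fiberwise E (fun e => e.2) (fun e => μg e.1 * g e)]
    simp_rw [heigg, ← Finset.mul_sum, hμg1, mul_one]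
  have hrowζ : ∑ x : Fin n, ρ x = rg := by
    rw [hρ]
    rw [Finset.sum_fiberwise E (fun e => e.1) (fun e => μg e.1 * g e)]
    exact hsumζ
  -- key weighted sums
  have hA : ∑ e ∈ E, ρ e.2 / (rg * μg e.2) * (μg e.1 * g e) = rg := by
    calc ∑ e ∈ E, ρ e.2 / (rg * μg e.2) * (μg e.1 * g e)
        = ∑ e ∈ E, (μg e.1 * g e) * (ρ e.2 / (rg * μg e.2)) :=
          Finset.sum_congr rfl fun e _ => mul_comm _ _
      _ = ∑ x : Fin n, (∑ e ∈ E.filter (fun e => e.2 = x), μg e.1 * g e) *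
            (ρ x / (rg * μg x)) :=
          (fib2 E (fun e => μg e.1 * g e) (fun y => ρ y / (rg * μg y))).symm
      _ = ∑ x : Fin n, ρ x := by
          refine Finset.sum_congr rfl fun x _ => ?_
          rw [heigg x]
          field_simp [hrg.ne', (hμg x).ne']
      _ = rg := hrowζ
  have h1 : ∑ e ∈ E, ρ e.2 / (rg * μg e.2) * (μf e.1 * f e)
      = ∑ x : Fin n, rf * μf x * (ρ x / (rg * μg x)) := by
    calc ∑ e ∈ E, ρ e.2 / (rg * μg e.2) * (μf e.1 * f e)
        = ∑ e ∈ E, (μf e.1 * f e) * (ρ e.2 / (rg * μg e.2)) :=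
          Finset.sum_congr rfl fun e _ => mul_comm _ _
      _ = ∑ x : Fin n, (∑ e ∈ E.filter (fun e => e.2 = x), μf e.1 * f e) *
            (ρ x / (rg * μg x)) :=
          (fib2 E (fun e => μf e.1 * f e) (fun y => ρ y / (rg * μg y))).symm
      _ = ∑ x : Fin n, rf * μf x * (ρ x / (rg * μg x)) :=
          Finset.sum_congr rfl fun x _ => by rw [heigf x]
  have h2 : ∑ e ∈ E, μf e.1 * g e = ∑ x : Fin n, ρ x * (μf x / μg x) := by
    calc ∑ e ∈ E, μf e.1 * g e
        = ∑ e ∈ E, (μg e.1 * g e) * (μf e.1 / μg e.1) := by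
          refine Finset.sum_congr rfl fun e _ => ?_
          field_simp [(hμg e.1).ne']
      _ = ∑ x : Fin n, ρ x * (μf x / μg x) := by
          simp only [hρ]
          exact (fib1 E (fun e => μg e.1 * g e) (fun x => μf x / μg x)).symm
  have hB : ∑ e ∈ E, ρ e.2 / (rg * μg e.2) * (μf e.1 * f e)
      = rf / rg * ∑ e ∈ E, μf e.1 * g e := by
    rw [h1, h2, Finset.mul_sum]
    refine Finset.sum_congr rfl fun x _ => ?_
    field_simp [hrg.ne', (hμg x).ne']
  -- gradient term
  have hgrad : (∑ e ∈ E,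
      (Real.log (μg e.1 * g e) + 1
        - Real.log (∑ e' ∈ E.filter (fun e' => e'.2 = e.1), μg e'.1 * g e')
        - (∑ e' ∈ E.filter (fun e' => e'.1 = e.2), μg e'.1 * g e') /
            (∑ e' ∈ E.filter (fun e' => e'.2 = e.2), μg e'.1 * g e'))
      * (μg e.1 * g e - μf e.1 * f e))
      = ∑ e ∈ E, ((μg e.1 * g e * (Real.log (g e) - Real.log rg)
          - μf e.1 * f e * (Real.log (g e) - Real.log rg))
          + (μg e.1 * g e - μf e.1 * f e)
          - (ρ e.2 / (rg * μg e.2) * (μg e.1 * g e)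
            - ρ e.2 / (rg * μg e.2) * (μf e.1 * f e))) := by
    refine Finset.sum_congr rfl fun e he => ?_
    rw [heigg e.1, heigg e.2,
      Real.log_mul (hμg e.1).ne' (hg e he).ne', Real.log_mul hrg.ne' (hμg e.1).ne']
    ring
  -- right-hand side
  have hrhs : (∑ e ∈ E, μf e.1 * f e *
        (-Real.log ((g e / rg) / (f e / rf)) + ((g e / rg) / (f e / rf) - 1)))
      = ∑ e ∈ E, (μf e.1 * f e * (Real.log (f e) - Real.log rf)
          - μf e.1 * f e * (Real.log (g e) - Real.log rg)
          + rf / rg * (μf e.1 * g e) - μf e.1 * f e) := by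
    refine Finset.sum_congr rfl fun e he => ?_
    have hfe := hf e he
    have hge := hg e he
    rw [Real.log_div (div_pos hge hrg).ne' (div_pos hfe hrf).ne',
      Real.log_div hge.ne' hrg.ne', Real.log_div hfe.ne' hrf.ne']
    field_simp
    ring
  rw [hphif, hphig, hgrad, hrhs]
  simp only [Finset.sum_add_distrib, Finset.sum_sub_distrib, Finset.mul_sum]
  rw [hsumη, hsumζ, hA, hB]
  rw [Finset.mul_sum]
  ring
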